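/- If a sequence (a_n) of positive reals satisfies a_n ~ C e^{-γn} n^{-3/2} for some constants C > 0 and γ ≥ 0, then a_{n-1}/a_n → e^{γ} and the self-convolution satisfies (Σ_{i=0}^n a_i a_{n-i})/a_n → 2 Σ_{i=0}^∞ a_i e^{γ i} < ∞ as n → ∞; that is, (a_n) belongs to the class Ss(γ). -/

import Mathlib

/-!
Tilting by `exp (γ n)` turns `a` into `c n = a n e^{γ n} ~ C n^{-3/2}` and multiplies both the
convolution `Σ a i a (n - i)` and `a n` by `e^{γ n}`, so it suffices to treat `γ = 0`. There `c` is
summable, `c (n - i) / c n → 1` for each fixed `i`, and `c (n - i) ≤ K c n` for `i ≤ n / 2`. By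
the symmetry `i ↔ n - i` the convolution splits into two sums over `i ≤ n / 2`, and dominated
convergence with bound `K c i` sends each of them, divided by `c n`, to `Σ c i`.
-/

open Filter Real Finset Topology Asymptotics

theorem sum_range_succ_mul_sub_eq_add {R : Type*} [CommSemiring R] (c : ℕ → R) (n : ℕ) :
    ∑ i ∈ range (n + 1), c i * c (n - i) =
      ∑ i ∈ range (n / 2 + 1), c i * c (n - i) + ∑ i ∈ range (n - n / 2), c i * c (n - i) := by
  set g : ℕ → R := fun i => c i * c (n - i)
  have hsymm : ∀ j ∈ range (n - n / 2), g (n / 2 + 1 + (n - n / 2 - 1 - j)) = g j := by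
    intro j hj
    have := mem_range.1 hj
    simp only [g, show n / 2 + 1 + (n - n / 2 - 1 - j) = n - j by omega,
      show n - (n - j) = j by omega, mul_comm]
  calc ∑ i ∈ range (n + 1), g i
      = ∑ i ∈ range (n / 2 + 1), g i + ∑ j ∈ range (n - n / 2), g (n / 2 + 1 + j) := by
        rw [← sum_range_add, show n / 2 + 1 + (n - n / 2) = n + 1 by omega]
    _ = ∑ i ∈ range (n / 2 + 1), g i + ∑ j ∈ range (n - n / 2), g j := by
        rw [← sum_range_reflect (fun j => g (n / 2 + 1 + j)), sum_congr rfl hsymm]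

section Convolution

variable {c : ℕ → ℝ}

theorem tendsto_sum_range_mul_sub_div (hpos : ∀ n, 0 < c n) (hsum : Summable c)
    (hlong : ∀ i, Tendsto (fun n => c (n - i) / c n) atTop (𝓝 1)) {K : ℝ}
    (hdom : ∀ᶠ n in atTop, ∀ i ≤ n / 2, c (n - i) ≤ K * c n)
    {k : ℕ → ℕ} (hk : ∀ n, k n ≤ n / 2 + 1) (hk_top : Tendsto k atTop atTop) :
    Tendsto (fun n => ∑ i ∈ range (k n), c i * c (n - i) / c n) atTop (𝓝 (∑' i, c i)) := by
  set f : ℕ → ℕ → ℝ := fun n i => if i < k n then c i * c (n - i) / c n else 0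
  have hf : ∀ n, ∑' i, f n i = ∑ i ∈ range (k n), c i * c (n - i) / c n := fun n => by
    rw [tsum_eq_sum (s := range (k n)) fun i hi => if_neg (by simpa using hi)]
    exact sum_congr rfl fun i hi => if_pos (mem_range.1 hi)
  have hlim : ∀ i, Tendsto (fun n => f n i) atTop (𝓝 (c i)) := fun i => by
    refine (mul_one (c i) ▸ (hlong i).const_mul (c i)).congr' ?_
    filter_upwards [hk_top.eventually_gt_atTop i] with n hn
    simp only [f, if_pos hn, mul_div_assoc]
  have hbound : ∀ᶠ n in atTop, ∀ i, ‖f n i‖ ≤ K * c i := by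
    filter_upwards [hdom] with n hn i
    have hK : 1 ≤ K := le_of_mul_le_mul_right (by simpa using hn 0 (Nat.zero_le _)) (hpos n)
    by_cases hi : i < k n
    · have hratio : c (n - i) / c n ≤ K := (div_le_iff₀ (hpos n)).2 (hn i (by have := hk n; omega))
      have hterm : 0 ≤ c (n - i) / c n := div_nonneg (hpos _).le (hpos n).le
      simp only [f, if_pos hi, mul_div_assoc, norm_mul, Real.norm_of_nonneg (hpos i).le,
        Real.norm_of_nonneg hterm]
      rw [mul_comm K]
      exact mul_le_mul_of_nonneg_left hratio (hpos i).le
    · simp only [f, if_neg hi, norm_zero]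
      exact mul_nonneg (by linarith) (hpos i).le
  exact (tendsto_tsum_of_dominated_convergence (hsum.mul_left K) hlim hbound).congr hf

theorem tendsto_sum_range_mul_sub_div_two_mul_tsum (hpos : ∀ n, 0 < c n) (hsum : Summable c)
    (hlong : ∀ i, Tendsto (fun n => c (n - i) / c n) atTop (𝓝 1))
    (hdom : ∃ K, ∀ᶠ n in atTop, ∀ i ≤ n / 2, c (n - i) ≤ K * c n) :
    Tendsto (fun n => (∑ i ∈ range (n + 1), c i * c (n - i)) / c n) atTop
      (𝓝 (2 * ∑' i, c i)) := by
  obtain ⟨K, hK⟩ := hdom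
  have hlow := tendsto_sum_range_mul_sub_div hpos hsum hlong hK (k := fun n => n / 2 + 1)
    (fun _ => le_rfl) (tendsto_add_atTop_nat 1 |>.comp (Nat.tendsto_div_const_atTop two_ne_zero))
  have hhigh := tendsto_sum_range_mul_sub_div hpos hsum hlong hK (k := fun n => n - n / 2)
    (fun n => by omega) (tendsto_atTop_atTop.2 fun b => ⟨2 * b, fun n hn => by omega⟩)
  rw [two_mul]
  refine (hlow.add hhigh).congr fun n => ?_
  simp only [← sum_div, ← add_div, sum_range_succ_mul_sub_eq_add]

end Convolution

theorem rpow_le_two_rpow_neg_mul_rpow {x y p : ℝ} (hx : 0 < x) (hxy : x / 2 ≤ y) (hp : p ≤ 0) :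
    y ^ p ≤ 2 ^ (-p) * x ^ p :=
  calc y ^ p ≤ (x / 2) ^ p := rpow_le_rpow_of_nonpos (by positivity) hxy hp
    _ = 2 ^ (-p) * x ^ p := by
      rw [div_rpow hx.le zero_le_two, rpow_neg zero_le_two, div_eq_inv_mul]

section PowerAsymptotics

variable {c : ℕ → ℝ} {C p : ℝ}

theorem tendsto_div_sub_of_isEquivalent_rpow (hpos : ∀ n, 0 < c n)
    (hc : c ~[atTop] fun n : ℕ => C * (n : ℝ) ^ p) (i : ℕ) :
    Tendsto (fun n => c (n - i) / c n) atTop (𝓝 1) := by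
  have hsub : (fun n : ℕ => ((n - i : ℕ) : ℝ)) ~[atTop] fun n : ℕ => (n : ℝ) := by
    refine (IsEquivalent.refl.add_const_of_norm_tendsto_atTop (c := -(i : ℝ))
      (tendsto_norm_atTop_atTop.comp tendsto_natCast_atTop_atTop)).congr_left ?_
    filter_upwards [eventually_ge_atTop i] with n hn
    simp [Nat.cast_sub hn, sub_eq_add_neg]
  have hshift : (fun n => c (n - i)) ~[atTop] c :=
    (hc.comp_tendsto (tendsto_sub_atTop_nat i)).trans <|
      (IsEquivalent.refl.mul (hsub.rpow fun n => Nat.cast_nonneg _)).trans hc.symm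
  exact (isEquivalent_iff_tendsto_one (.of_forall fun n => (hpos n).ne')).1 hshift

theorem exists_le_mul_of_isEquivalent_rpow (hC : 0 < C) (hp : p ≤ 0)
    (hc : c ~[atTop] fun n : ℕ => C * (n : ℝ) ^ p) :
    ∃ K, ∀ᶠ n in atTop, ∀ i ≤ n / 2, c (n - i) ≤ K * c n := by
  set b : ℕ → ℝ := fun n => C * (n : ℝ) ^ p
  have hb : ∀ n, 1 ≤ n → 0 < b n := fun n hn => by
    have : (0 : ℝ) < n := by exact_mod_cast hn
    positivity
  have hratio : Tendsto (c / b) atTop (𝓝 1) :=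
    (isEquivalent_iff_tendsto_one ((eventually_ge_atTop 1).mono fun n hn => (hb n hn).ne')).1 hc
  obtain ⟨N, hN⟩ := ((hratio.eventually (eventually_ge_nhds one_half_lt_one)).and
    ((hratio.eventually (eventually_le_nhds one_lt_two)).and
      (eventually_ge_atTop 1))).exists_forall_of_atTop
  refine ⟨4 * 2 ^ (-p), ?_⟩
  filter_upwards [eventually_ge_atTop (2 * N + 1)] with n hn i hi
  obtain ⟨hlow, -, hn1⟩ := hN n (by omega)
  obtain ⟨-, hup, -⟩ := hN (n - i) (by omega)
  rw [Pi.div_apply, le_div_iff₀ (hb n hn1)] at hlow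
  rw [Pi.div_apply, div_le_iff₀ (hb (n - i) (by omega))] at hup
  have hhalf : (n : ℝ) / 2 ≤ ((n - i : ℕ) : ℝ) := by
    rw [div_le_iff₀ two_pos]
    exact_mod_cast (by omega : n ≤ (n - i) * 2)
  have hshift : b (n - i) ≤ 2 ^ (-p) * b n := by
    rw [mul_left_comm]
    exact mul_le_mul_of_nonneg_left
      (rpow_le_two_rpow_neg_mul_rpow (by exact_mod_cast hn1) hhalf hp) hC.le
  have htwo : 0 < (2 : ℝ) ^ (-p) := by positivity
  calc c (n - i) ≤ 2 * b (n - i) := by linarith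
    _ ≤ 2 * (2 ^ (-p) * b n) := by linarith
    _ ≤ 4 * 2 ^ (-p) * c n := by nlinarith

end PowerAsymptotics

noncomputable def expTilt (γ : ℝ) (a : ℕ → ℝ) (n : ℕ) : ℝ := a n * exp (γ * n)

section ExpTilt

variable (γ : ℝ) (a : ℕ → ℝ)

theorem expTilt_div_rpow (C p : ℝ) (n : ℕ) :
    expTilt γ a n / (C * (n : ℝ) ^ p) = a n / (C * exp (-γ * n) * (n : ℝ) ^ p) := by
  rw [expTilt, neg_mul, exp_neg]
  field_simp

theorem expTilt_sub_one_div_mul_exp {n : ℕ} (hn : 1 ≤ n) :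
    expTilt γ a (n - 1) / expTilt γ a n * exp γ = a (n - 1) / a n := by
  have hexp : exp (γ * (n - 1)) * exp γ = exp (γ * n) := by rw [← exp_add]; ring_nf
  rw [expTilt, expTilt, Nat.cast_sub hn, Nat.cast_one, div_mul_eq_mul_div, mul_assoc, hexp,
    mul_div_mul_right _ _ (exp_ne_zero _)]

theorem sum_range_expTilt_mul_sub_div (n : ℕ) :
    (∑ i ∈ range (n + 1), expTilt γ a i * expTilt γ a (n - i)) / expTilt γ a n =
      (∑ i ∈ range (n + 1), a i * a (n - i)) / a n := by
  have hsum : ∑ i ∈ range (n + 1), expTilt γ a i * expTilt γ a (n - i) =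
      (∑ i ∈ range (n + 1), a i * a (n - i)) * exp (γ * n) := by
    rw [sum_mul]
    refine sum_congr rfl fun i hi => ?_
    rw [expTilt, expTilt, Nat.cast_sub (Nat.lt_succ_iff.1 (mem_range.1 hi)), mul_mul_mul_comm,
      ← exp_add]
    ring_nf
  rw [hsum, expTilt, mul_div_mul_right _ _ (exp_ne_zero _)]

end ExpTilt

theorem stmt0_general (a : ℕ → ℝ) (C γ : ℝ) (hC : 0 < C)
    (hpos : ∀ n, 0 < a n)
    (hasymp : Tendsto
      (fun n : ℕ => a n / (C * Real.exp (-γ * n) * (n : ℝ) ^ (-(3 : ℝ) / 2)))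
      atTop (nhds 1)) :
    Tendsto (fun n : ℕ => a (n - 1) / a n) atTop (nhds (Real.exp γ)) ∧
    Summable (fun i : ℕ => a i * Real.exp (γ * i)) ∧
    Tendsto
      (fun n : ℕ => (∑ i ∈ Finset.range (n + 1), a i * a (n - i)) / a n)
      atTop (nhds (2 * ∑' i : ℕ, a i * Real.exp (γ * i))) := by
  have hcpos : ∀ n, 0 < expTilt γ a n := fun n => mul_pos (hpos n) (exp_pos _)
  have hc : expTilt γ a ~[atTop] fun n : ℕ => C * (n : ℝ) ^ (-(3 : ℝ) / 2) :=
    isEquivalent_of_tendsto_one (hasymp.congr fun n => (expTilt_div_rpow γ a C _ n).symm)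
  have hsum : Summable (expTilt γ a) :=
    hc.summable_iff_nat.2 ((summable_nat_rpow.2 (by norm_num)).mul_left C)
  have hlong := tendsto_div_sub_of_isEquivalent_rpow hcpos hc
  refine ⟨?_, hsum, ?_⟩
  · refine (one_mul (exp γ) ▸ (hlong 1).mul_const (exp γ)).congr' ?_
    filter_upwards [eventually_ge_atTop 1] with n hn
    exact expTilt_sub_one_div_mul_exp γ a hn
  · exact (tendsto_sum_range_mul_sub_div_two_mul_tsum hcpos hsum hlong
      (exists_le_mul_of_isEquivalent_rpow hC (by norm_num) hc)).congr
      (sum_range_expTilt_mul_sub_div γ a)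

/-- If a sequence of positive reals satisfies `a n ~ C e^{-γ n} n^{-3/2}`
with `C > 0`, `γ ≥ 0`, then `a (n-1) / a n → e^γ`, the series `Σ a i e^{γ i}` converges,
and the self-convolution satisfies `(Σ_{i≤n} a i a (n-i)) / a n → 2 Σ_{i} a i e^{γ i}`,
i.e. `a` belongs to the class `Ss(γ)`. -/
theorem stmt0 (a : ℕ → ℝ) (C γ : ℝ) (hC : 0 < C) (hγ : 0 ≤ γ)
    (hpos : ∀ n, 0 < a n)
    (hasymp : Tendsto
      (fun n : ℕ => a n / (C * Real.exp (-γ * n) * (n : ℝ) ^ (-(3 : ℝ) / 2)))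
      atTop (nhds 1)) :
    Tendsto (fun n : ℕ => a (n - 1) / a n) atTop (nhds (Real.exp γ)) ∧
    Summable (fun i : ℕ => a i * Real.exp (γ * i)) ∧
    Tendsto
      (fun n : ℕ => (∑ i ∈ Finset.range (n + 1), a i * a (n - i)) / a n)
      atTop (nhds (2 * ∑' i : ℕ, a i * Real.exp (γ * i))) :=
  stmt0_general a C γ hC hpos hasymp
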